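/- arXiv:1501.07511 — 2 statements merged into one kernel-verified Lean document; each statement's English description precedes it below -/
import Mathlib

section
/- Let c₁, c₂ ∈ ℂ satisfy c₁⁷ = 1 and c₂⁷ = 1, and let A be the 3×3 complex matrix with rows (2−c₁−c₁⁶, 2−c₁c₂⁶−c₁⁶c₂, 2−c₂−c₂⁶), (2−c₁²−c₁⁵, 2−c₁²c₂⁵−c₁⁵c₂², 2−c₂²−c₂⁵), (2−c₁³−c₁⁴, 2−c₁³c₂⁴−c₁⁴c₂³, 2−c₂³−c₂⁴). Then det A = 7·(c₁⁶(c₂³−c₂⁵) + c₁⁵(c₂⁶−c₂³) + c₁⁴(c₂²−c₂) + c₁³(c₂⁵−c₂⁶) + c₁²(c₂−c₂⁴) + c₁(c₂⁴−c₂²)). -/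
/-- Determinant formula from the proof of Theorem 5.2 of "The Prym map of degree-7
cyclic coverings": for 7th roots of unity `c₁, c₂`, the determinant of the coefficient
matrix `A` of the multiplication map `μ_{X,η}` equals
`7·(c₁⁶(c₂³−c₂⁵) + c₁⁵(c₂⁶−c₂³) + c₁⁴(c₂²−c₂) + c₁³(c₂⁵−c₂⁶) + c₁²(c₂−c₂⁴) + c₁(c₂⁴−c₂²))`. -/
theorem stmt9 (c₁ c₂ : ℂ) (h₁ : c₁ ^ 7 = 1) (h₂ : c₂ ^ 7 = 1) :
    Matrix.det
      !![2 - c₁ - c₁ ^ 6, 2 - c₁ * c₂ ^ 6 - c₁ ^ 6 * c₂, 2 - c₂ - c₂ ^ 6;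
         2 - c₁ ^ 2 - c₁ ^ 5, 2 - c₁ ^ 2 * c₂ ^ 5 - c₁ ^ 5 * c₂ ^ 2, 2 - c₂ ^ 2 - c₂ ^ 5;
         2 - c₁ ^ 3 - c₁ ^ 4, 2 - c₁ ^ 3 * c₂ ^ 4 - c₁ ^ 4 * c₂ ^ 3, 2 - c₂ ^ 3 - c₂ ^ 4] =
      7 * (c₁ ^ 6 * (c₂ ^ 3 - c₂ ^ 5) + c₁ ^ 5 * (c₂ ^ 6 - c₂ ^ 3) + c₁ ^ 4 * (c₂ ^ 2 - c₂)
        + c₁ ^ 3 * (c₂ ^ 5 - c₂ ^ 6) + c₁ ^ 2 * (c₂ - c₂ ^ 4) + c₁ * (c₂ ^ 4 - c₂ ^ 2)) := by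
  rw [Matrix.det_fin_three]
  simp only [Matrix.cons_val', Matrix.cons_val_zero, Matrix.cons_val_one, Matrix.head_cons,
    Matrix.empty_val', Matrix.cons_val_fin_one, Matrix.head_fin_const, Matrix.cons_val_two,
    Matrix.tail_cons, Matrix.of_apply]
  linear_combination
    ((-2:ℂ)*c₁^1*c₂^1 + (-2:ℂ)*c₁^1*c₂^2 + (1:ℂ)*c₁^1*c₂^3 + (3:ℂ)*c₁^1*c₂^4 + (2:ℂ)*c₁^1*c₂^5 + (-1:ℂ)*c₁^1*c₂^9 + (-1:ℂ)*c₁^1*c₂^10 + (2:ℂ)*c₁^2*c₂^1 + (-2:ℂ)*c₁^2*c₂^2 + (2:ℂ)*c₁^2*c₂^3 + (-3:ℂ)*c₁^2*c₂^4 + (1:ℂ)*c₁^2*c₂^8 + (2:ℂ)*c₁^3*c₂^1 + (-3:ℂ)*c₁^3*c₂^3 + (1:ℂ)*c₁^3*c₂^5 + (-1:ℂ)*c₁^3*c₂^6 + (1:ℂ)*c₁^3*c₂^8 + (-2:ℂ)*c₁^4*c₂^1 + (2:ℂ)*c₁^4*c₂^2 + (1:ℂ)*c₁^4*c₂^4 +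 (-1:ℂ)*c₁^4*c₂^6) * h₁
    + ((2:ℂ)*c₁^1*c₂^1 + (-3:ℂ)*c₁^1*c₂^2 + (-3:ℂ)*c₁^1*c₂^3 + (2:ℂ)*c₁^1*c₂^4 + (3:ℂ)*c₁^2*c₂^1 + (2:ℂ)*c₁^2*c₂^2 + (-2:ℂ)*c₁^2*c₂^4 + (-2:ℂ)*c₁^3*c₂^2 + (3:ℂ)*c₁^3*c₂^3 + (-3:ℂ)*c₁^4*c₂^1 + (3:ℂ)*c₁^4*c₂^2 + (-1:ℂ)*c₁^4*c₂^4 + (-2:ℂ)*c₁^5*c₂^1 + (-1:ℂ)*c₁^5*c₂^3 + (1:ℂ)*c₁^6*c₂^3 + (1:ℂ)*c₁^6*c₂^4) * h₂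
end

section
/- Let c₁ ∈ ℂ be a primitive 7th root of unity (i.e., c₁⁷ = 1 and c₁ ≠ 1), let k be an integer with 2 ≤ k ≤ 6, set c₂ = c₁ᵏ, and let A be the 3×3 complex matrix with rows (2−c₁−c₁⁶, 2−c₁c₂⁶−c₁⁶c₂, 2−c₂−c₂⁶), (2−c₁²−c₁⁵, 2−c₁²c₂⁵−c₁⁵c₂², 2−c₂²−c₂⁵), (2−c₁³−c₁⁴, 2−c₁³c₂⁴−c₁⁴c₂³, 2−c₂³−c₂⁴). Then det A ≠ 0 if and only if k = 3 or k = 5. -/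
/-- From the proof of Theorem 5.2 of "The Prym map of degree-7 cyclic coverings":
for a primitive 7th root of unity `c₁` and `c₂ = c₁ᵏ` with `2 ≤ k ≤ 6`, the
determinant of the coefficient matrix `A` is nonzero if and only if `k = 3` or `k = 5`. -/
theorem stmt11 (c₁ c₂ : ℂ) (h₁ : c₁ ^ 7 = 1) (hne : c₁ ≠ 1)
    (k : ℕ) (hk2 : 2 ≤ k) (hk6 : k ≤ 6) (hc₂ : c₂ = c₁ ^ k) :
    Matrix.det
      !![2 - c₁ - c₁ ^ 6, 2 - c₁ * c₂ ^ 6 - c₁ ^ 6 * c₂, 2 - c₂ - c₂ ^ 6;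
         2 - c₁ ^ 2 - c₁ ^ 5, 2 - c₁ ^ 2 * c₂ ^ 5 - c₁ ^ 5 * c₂ ^ 2, 2 - c₂ ^ 2 - c₂ ^ 5;
         2 - c₁ ^ 3 - c₁ ^ 4, 2 - c₁ ^ 3 * c₂ ^ 4 - c₁ ^ 4 * c₂ ^ 3, 2 - c₂ ^ 3 - c₂ ^ 4] ≠ 0
      ↔ (k = 3 ∨ k = 5) := by
  have hΦ : 1 + c₁ + c₁ ^ 2 + c₁ ^ 3 + c₁ ^ 4 + c₁ ^ 5 + c₁ ^ 6 = 0 := by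
    have h : (c₁ - 1) * (1 + c₁ + c₁ ^ 2 + c₁ ^ 3 + c₁ ^ 4 + c₁ ^ 5 + c₁ ^ 6) = 0 := by
      linear_combination h₁
    rcases mul_eq_zero.mp h with h' | h'
    · exact absurd (sub_eq_zero.mp h') hne
    · exact h'
  subst hc₂
  simp only [Matrix.det_fin_three, Matrix.of_apply, Matrix.cons_val', Matrix.cons_val_zero,
    Matrix.cons_val_one, Matrix.head_cons, Matrix.empty_val', Matrix.cons_val_fin_one,
    Matrix.head_fin_const, Matrix.cons_val_two, Matrix.tail_cons]
  interval_cases k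
  · -- k = 2
    refine iff_of_false (fun h => h ?_) (by omega)
    linear_combination ((-2) * c₁ ^ 4 + 4 * c₁ ^ 5 + 2 * c₁ ^ 6 + (-6) * c₁ ^ 7 + (-2) * c₁ ^ 9 + 4 * c₁ ^ 10 + 4 * c₁ ^ 11 + (-2) * c₁ ^ 12 + (-6) * c₁ ^ 14 + 2 * c₁ ^ 15 + 4 * c₁ ^ 16 + (-2) * c₁ ^ 17) * h₁ + ((0:ℂ)) * hΦ
  · -- k = 3
    refine iff_of_true (fun h => ?_) (by norm_num)
    have h49 : (49:ℂ) = 0 := by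
      linear_combination -h + ((-42) + 7 * c₁ + 7 * c₁ ^ 2 + 7 * c₁ ^ 3 + 7 * c₁ ^ 4 + 5 * c₁ ^ 5 + 9 * c₁ ^ 6 + (-38) * c₁ ^ 7 + 5 * c₁ ^ 8 + 5 * c₁ ^ 9 + 3 * c₁ ^ 10 + 11 * c₁ ^ 11 + 3 * c₁ ^ 12 + 5 * c₁ ^ 13 + (-26) * c₁ ^ 14 + 1 * c₁ ^ 15 + 7 * c₁ ^ 16 + 4 * c₁ ^ 18 + 6 * c₁ ^ 19 + 2 * c₁ ^ 20 + (-10) * c₁ ^ 21 + (-3) * c₁ ^ 23 + 1 * c₁ ^ 25 + 4 * c₁ ^ 26 + 3 * c₁ ^ 27 + (-4) * c₁ ^ 28 + 1 * c₁ ^ 29 + (-1) * c₁ ^ 30 + (-1) * c₁ ^ 31 + 1 * c₁ ^ 32) * h₁ + (7) * hΦ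
    norm_num at h49
  · -- k = 4
    refine iff_of_false (fun h => h ?_) (by omega)
    linear_combination ((-2) * c₁ ^ 6 + 2 * c₁ ^ 7 + 2 * c₁ ^ 8 + (-2) * c₁ ^ 11 + (-6) * c₁ ^ 13 + 2 * c₁ ^ 14 + 4 * c₁ ^ 15 + 2 * c₁ ^ 16 + 6 * c₁ ^ 17 + (-6) * c₁ ^ 18 + (-2) * c₁ ^ 19 + (-7) * c₁ ^ 20 + 2 * c₁ ^ 21 + 8 * c₁ ^ 22 + (-4) * c₁ ^ 23 + 3 * c₁ ^ 24 + (-3) * c₁ ^ 25 + 5 * c₁ ^ 26 + (-2) * c₁ ^ 27 + (-1) * c₁ ^ 28 + 1 * c₁ ^ 29 + (-5) * c₁ ^ 30 + 3 * c₁ ^ 31 + (-3) * c₁ ^ 32 + 3 * c₁ ^ 33 + (-3) * c₁ ^ 34 + 1 * c₁ ^ 35 + 4 * c₁ ^ 36 + (-1) * c₁ ^ 37 + 1 * c₁ ^ 38 + (-1) * c₁ ^ 39 + (-2) * c₁ ^ 41 + 1 * c₁ ^ 43) * h₁ + ((0:ℂ)) * hΦ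
  · -- k = 5
    refine iff_of_true (fun h => ?_) (by norm_num)
    have h49 : (-49:ℂ) = 0 := by
      linear_combination -h + (42 + (-7) * c₁ + (-7) * c₁ ^ 2 + (-7) * c₁ ^ 3 + (-7) * c₁ ^ 4 + (-7) * c₁ ^ 5 + (-7) * c₁ ^ 6 + 40 * c₁ ^ 7 + (-5) * c₁ ^ 8 + (-5) * c₁ ^ 9 + (-9) * c₁ ^ 10 + (-5) * c₁ ^ 11 + (-7) * c₁ ^ 12 + (-7) * c₁ ^ 13 + 36 * c₁ ^ 14 + (-7) * c₁ ^ 15 + (-5) * c₁ ^ 16 + (-7) * c₁ ^ 17 + (-3) * c₁ ^ 18 + (-5) * c₁ ^ 19 + (-1) * c₁ ^ 20 + 26 * c₁ ^ 21 + (-5) * c₁ ^ 22 + (-6) * c₁ ^ 23 + (-9) * c₁ ^ 24 + (-2) * c₁ ^ 26 + (-1) * c₁ ^ 27 + 17 * c₁ ^ 28 + (-2) * c₁ ^ 29 + (-6) * c₁ ^ 30 + (-3) * c₁ ^ 31 + 2 * c₁ ^ 33 + (-2) * c₁ ^ 34 + 9 * c₁ ^ 35 + (-2) * c₁ ^ 36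 + (-6) * c₁ ^ 37 + (-3) * c₁ ^ 38 + 3 * c₁ ^ 40 + (-3) * c₁ ^ 41 + 7 * c₁ ^ 42 + (-1) * c₁ ^ 43 + (-3) * c₁ ^ 44 + (-1) * c₁ ^ 45 + 2 * c₁ ^ 46 + 1 * c₁ ^ 47 + (-1) * c₁ ^ 48 + 3 * c₁ ^ 49 + (-2) * c₁ ^ 50 + (-1) * c₁ ^ 51 + (-1) * c₁ ^ 52 + 1 * c₁ ^ 54) * h₁ + ((-7)) * hΦ
    norm_num at h49
  · -- k = 6
    refine iff_of_false (fun h => h ?_) (by omega)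
    linear_combination ((-2) * c₁ ^ 8 + 2 * c₁ ^ 9 + 2 * c₁ ^ 10 + (-2) * c₁ ^ 11 + 2 * c₁ ^ 13 + 2 * c₁ ^ 14 + (-6) * c₁ ^ 15 + (-2) * c₁ ^ 16 + 4 * c₁ ^ 17 + (-2) * c₁ ^ 18 + (-2) * c₁ ^ 19 + 6 * c₁ ^ 20 + 4 * c₁ ^ 21 + (-6) * c₁ ^ 22 + 2 * c₁ ^ 23 + (-2) * c₁ ^ 24 + (-4) * c₁ ^ 25 + (-1) * c₁ ^ 26 + 4 * c₁ ^ 27 + 7 * c₁ ^ 28 + (-6) * c₁ ^ 29 + 3 * c₁ ^ 30 + (-7) * c₁ ^ 32 + (-4) * c₁ ^ 33 + 4 * c₁ ^ 34 + 6 * c₁ ^ 35 + 1 * c₁ ^ 36 + 3 * c₁ ^ 37 + (-2) * c₁ ^ 38 + (-1) * c₁ ^ 39 + (-6) * c₁ ^ 40 + (-3) * c₁ ^ 41 + 6 * c₁ ^ 42 + 1 * c₁ ^ 43 + 3 * c₁ ^ 44 + (-2) * c₁ ^ 45 + (-5) * c₁ ^ 47 + (-3) * c₁ ^ 48 + 4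 * c₁ ^ 49 + (-1) * c₁ ^ 50 + 4 * c₁ ^ 51 + 1 * c₁ ^ 52 + 2 * c₁ ^ 53 + (-5) * c₁ ^ 54 + (-1) * c₁ ^ 55 + 2 * c₁ ^ 56 + 1 * c₁ ^ 59 + 2 * c₁ ^ 60 + (-3) * c₁ ^ 61 + (-1) * c₁ ^ 63 + 1 * c₁ ^ 65) * h₁ + ((0:ℂ)) * hΦ
end
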